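/- Let N ≥ 1 be an integer, ζ ∈ ℂ∖{0}, and ρ, ξ ∈ ℂ∖{0,1}. Then in ℂ⟦q⟧ one has ⟨t_N(ζ;·) ⊗ ŝ(ρ,ξ;·)⟩_q = Σ_{m≥1}(ζ^m + ζ^{−m})·ρ^m·[(ξ + ξ² + ⋯ + ξ^{Nm})·q^{Nm²} + Σ_{r>Nm}(ξ^r − ξ^{r−Nm})·q^{mr}] − Σ_{m≥1}(ζ^m + ζ^{−m})·ρ^{−m}·[(ξ^{−1} + ξ^{−2} + ⋯ + ξ^{−Nm})·q^{Nm²} + Σ_{r>Nm}(ξ^{−r} − ξ^{−r+Nm})·q^{mr}], where ⟨f ⊗ g⟩_q := ⟨f·g⟩_q − ⟨f⟩_q·⟨g⟩_q (both sides are well-defined formal power series, each coefficient of q^K being a finite sum). -/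

import Mathlib

open scoped Classical
open Finset

noncomputable section

/-- A partition: a finitely supported multiplicity function on the positive integers. -/
abbrev Ptn : Type := ℕ+ →₀ ℕ

/-- The size `|λ| = Σ_m m · r_m(λ)` of a partition. -/
def psize (l : Ptn) : ℕ := l.sum fun m r => (m : ℕ) * r

/-- The power series `Σ_λ f(λ) u_λ ∈ ℂ⟦u₁,u₂,…⟧`: its coefficient on the monomial
`u_λ = ∏_m u_m^{r_m(λ)}` is `f(λ)`. -/
def useries (f : Ptn → ℂ) : MvPowerSeries ℕ+ ℂ := f

/-- The u-bracket `⟨f⟩_u = (Σ_λ f(λ)u_λ)·(Σ_λ u_λ)⁻¹`. -/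
def ubracket (f : Ptn → ℂ) : MvPowerSeries ℕ+ ℂ :=
  useries f * (useries fun _ => 1)⁻¹

/-- The power series `Σ_λ f(λ) q^{|λ|}`; the coefficient of `q^n` is `Σ_{|λ|=n} f(λ)`
(a finite sum, written here as a `tsum`). -/
def qseries (f : Ptn → ℂ) : PowerSeries ℂ :=
  PowerSeries.mk fun n => ∑' l : {l : Ptn // psize l = n}, f l

/-- The q-bracket `⟨f⟩_q`. -/
def qbracket (f : Ptn → ℂ) : PowerSeries ℂ :=
  qseries f * (qseries fun _ => 1)⁻¹

/-- `α` is a set partition of `{1,…,k}` (as `Fin k`). -/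
def IsSetPtn {k : ℕ} (α : Finset (Finset (Fin k))) : Prop :=
  (∀ A ∈ α, A.Nonempty) ∧ ∀ x : Fin k, ∃! A, A ∈ α ∧ x ∈ A

/-- `Π(k)`: the set of set partitions of `{1,…,k}`. -/
def setPtns (k : ℕ) : Finset (Finset (Finset (Fin k))) :=
  Finset.univ.filter IsSetPtn

/-- `μ(α,1̂) = (−1)^{|α|+1}(|α|−1)!`. -/
def muTop {k : ℕ} (α : Finset (Finset (Fin k))) : ℂ :=
  (-1) ^ (α.card + 1) * (α.card - 1).factorial

/-- The connected u-bracket `⟨f₁ ⊗ ⋯ ⊗ f_k⟩_u`. -/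
def connU {k : ℕ} (f : Fin k → Ptn → ℂ) : MvPowerSeries ℕ+ ℂ :=
  ∑ α ∈ setPtns k, (MvPowerSeries.C : ℂ →+* MvPowerSeries ℕ+ ℂ) (muTop α) *
    ∏ A ∈ α, ubracket fun l => ∏ a ∈ A, f a l

/-- The connected q-bracket `⟨f₁ ⊗ ⋯ ⊗ f_k⟩_q`. -/
def connQ {k : ℕ} (f : Fin k → Ptn → ℂ) : PowerSeries ℂ :=
  ∑ α ∈ setPtns k, (PowerSeries.C : ℂ →+* PowerSeries ℂ) (muTop α) *
    ∏ A ∈ α, qbracket fun l => ∏ a ∈ A, f a l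

/-- `t_N(ζ;λ) = 1 + Σ_{m≥1}(ζ^m + ζ^{−m})·𝟙[r_m(λ) ≥ Nm]`. -/
def tFn (N : ℕ) (ζ : ℂ) (l : Ptn) : ℂ :=
  1 + ∑ m ∈ l.support,
    (ζ ^ (m : ℕ) + ζ ^ (-((m : ℕ) : ℤ))) * (if N * (m : ℕ) ≤ l m then 1 else 0)

/-- `s(ρ;λ) = ρ/(1−ρ) + 1/2 + Σ_{m≥1}(ρ^m − ρ^{−m})·r_m(λ)`. -/
def sFn (ρ : ℂ) (l : Ptn) : ℂ :=
  ρ / (1 - ρ) + 1 / 2 + ∑ m ∈ l.support,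
    (ρ ^ (m : ℕ) - ρ ^ (-((m : ℕ) : ℤ))) * (l m : ℂ)

/-- `ŝ(ρ,ξ;λ) = 1/(1−ρ) + ξ/(1−ξ) + Σ_{m≥1} Σ_{r=1}^{r_m(λ)} (ρ^m ξ^r − ρ^{−m} ξ^{−r})`. -/
def sHat (ρ ξ : ℂ) (l : Ptn) : ℂ :=
  1 / (1 - ρ) + ξ / (1 - ξ) + ∑ m ∈ l.support, ∑ r ∈ Finset.Icc 1 (l m),
    (ρ ^ (m : ℕ) * ξ ^ r - ρ ^ (-((m : ℕ) : ℤ)) * ξ ^ (-(r : ℤ)))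

-- AUX
section Aux
-- psize basics
lemma psize_eq_sum (l : Ptn) : psize l = ∑ m ∈ l.support, (m : ℕ) * l m := rfl

lemma mul_le_psize (l : Ptn) (m : ℕ+) : (m : ℕ) * l m ≤ psize l := by
  by_cases h : l m = 0
  · simp [h, psize]
  · exact Finset.single_le_sum (f := fun k : ℕ+ => (k : ℕ) * l k)
      (fun i _ => Nat.zero_le _) (Finsupp.mem_support_iff.2 h)

lemma le_psize_of_mem_support {l : Ptn} {m : ℕ+} (h : m ∈ l.support) : (m : ℕ) ≤ psize l := by
  have h1 : 1 ≤ l m := Nat.one_le_iff_ne_zero.2 (Finsupp.mem_support_iff.1 h)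
  calc (m : ℕ) = (m:ℕ) * 1 := (mul_one _).symm
    _ ≤ (m:ℕ) * l m := Nat.mul_le_mul_left _ h1
    _ ≤ psize l := mul_le_psize l m

lemma psize_add (a b : Ptn) : psize (a + b) = psize a + psize b := by
  unfold psize
  rw [Finsupp.sum_add_index (by simp) (by intros; rw [Nat.mul_add])]

lemma psize_single (m : ℕ+) (a : ℕ) : psize (Finsupp.single m a) = (m : ℕ) * a := by
  unfold psize; rw [Finsupp.sum_single_index]; simp

lemma psize_erase_add (l : Ptn) (m : ℕ+) :
    psize (l.erase m) + (m : ℕ) * l m = psize l := by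
  conv_rhs => rw [← Finsupp.erase_add_single m l]
  rw [psize_add, psize_single]

lemma psize_update (l : Ptn) (m : ℕ+) (v : ℕ) :
    psize (l.update m v) + (m : ℕ) * l m = psize l + (m : ℕ) * v := by
  rw [Finsupp.update_eq_erase_add_single, psize_add, psize_single]
  have := psize_erase_add l m
  omega

-- the finset of partitions of n
def Pfin (n : ℕ) : Finset Ptn :=
  ((Finset.Iic (⟨n+1, n.succ_pos⟩ : ℕ+)).finsupp (fun _ => Finset.range (n+1))).filter
    (fun l => psize l = n)

lemma mem_Pfin {n : ℕ} {l : Ptn} : l ∈ Pfin n ↔ psize l = n := by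
  constructor
  · exact fun h => (Finset.mem_filter.1 h).2
  · intro h
    refine Finset.mem_filter.2 ⟨Finset.mem_finsupp_iff.2 ⟨?_, ?_⟩, h⟩
    · intro m hm
      have := le_psize_of_mem_support hm
      rw [h] at this
      simp only [Finset.mem_Iic]
      exact PNat.coe_le_coe _ _ |>.1 (by simpa using this.trans (Nat.le_succ n))
    · intro m _
      have := mul_le_psize l m
      rw [h] at this
      have hm1 : 1 ≤ (m : ℕ) := m.2
      have : l m ≤ n := le_trans (Nat.le_mul_of_pos_left _ m.2) this
      exact Finset.mem_range.2 (Nat.lt_succ_of_le this)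

lemma coeff_qseries (f : Ptn → ℂ) (n : ℕ) :
    PowerSeries.coeff n (qseries f) = ∑ l ∈ Pfin n, f l := by
  rw [qseries, PowerSeries.coeff_mk]
  rw [← Finset.tsum_subtype (Pfin n) f]
  exact Equiv.tsum_eq (Equiv.subtypeEquivRight (fun l => by simp [mem_Pfin])) _ |>.symm

lemma Pfin_zero : Pfin 0 = {0} := by
  ext l
  simp only [mem_Pfin, Finset.mem_singleton]
  constructor
  · intro h
    ext m
    have := mul_le_psize l m
    rw [h] at this
    have h1 : (1:ℕ) ≤ (m:ℕ) := m.2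
    simp only [Finsupp.coe_zero, Pi.zero_apply]
    nlinarith
  · rintro rfl; simp [psize]

-- pairs
def Qfin (K : ℕ) : Finset (Ptn × Ptn) :=
  (Finset.HasAntidiagonal.antidiagonal K).biUnion fun uv => Pfin uv.1 ×ˢ Pfin uv.2

lemma mem_Qfin {K : ℕ} {p : Ptn × Ptn} : p ∈ Qfin K ↔ psize p.1 + psize p.2 = K := by
  simp only [Qfin, Finset.mem_biUnion, Finset.HasAntidiagonal.mem_antidiagonal, Finset.mem_product, mem_Pfin]
  constructor
  · rintro ⟨⟨u, v⟩, h1, h2, h3⟩; simp at h2 h3; omega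
  · intro h; exact ⟨(psize p.1, psize p.2), h, rfl, rfl⟩

lemma coeff_mul_qseries (f g : Ptn → ℂ) (K : ℕ) :
    PowerSeries.coeff K (qseries f * qseries g) = ∑ p ∈ Qfin K, f p.1 * g p.2 := by
  rw [PowerSeries.coeff_mul]
  rw [Qfin, Finset.sum_biUnion]
  · apply Finset.sum_congr rfl
    intro uv _
    rw [coeff_qseries, coeff_qseries, Finset.sum_mul_sum, Finset.sum_product]
  · intro x hx y hy hxy
    simp only [Finset.mem_coe, Finset.HasAntidiagonal.mem_antidiagonal] at hx hy
    apply Finset.disjoint_left.2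
    intro p hp hp'
    simp only [Finset.mem_product, mem_Pfin] at hp hp'
    exact hxy (by ext : 1 <;> omega)

-- appended to part1 content when testing
section Red
variable (N : ℕ) (ζ ρ ξ : ℂ)

def cc (m : ℕ+) : ℂ := ζ ^ (m : ℕ) + ζ ^ (-((m : ℕ) : ℤ))

def hh (m : ℕ+) (r : ℕ) : ℂ := ρ ^ (m : ℕ) * ξ ^ r - ρ ^ (-((m : ℕ) : ℤ)) * ξ ^ (-(r : ℤ))

def gg (m : ℕ+) (a : ℕ) : ℂ := ∑ r ∈ Finset.Icc 1 a, hh ρ ξ m r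

def II (m : ℕ+) (a : ℕ) : ℂ := if N * (m : ℕ) ≤ a then 1 else 0

lemma gg_zero (m : ℕ+) : gg ρ ξ m 0 = 0 := by simp [gg]

lemma gg_succ (m : ℕ+) (a : ℕ) : gg ρ ξ m (a + 1) = gg ρ ξ m a + hh ρ ξ m (a + 1) := by
  unfold gg
  rw [← Finset.sum_Icc_succ_top (by omega : 1 ≤ a + 1)]

lemma II_zero (hN : 1 ≤ N) (m : ℕ+) : II N m 0 = 0 := by
  unfold II
  have : 1 ≤ N * (m : ℕ) := Nat.one_le_iff_ne_zero.2 (by positivity)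
  simp [Nat.not_le.2 (by omega : 0 < N * (m:ℕ))]

def MM (K : ℕ) : Finset ℕ+ := Finset.Iic ⟨K + 1, K.succ_pos⟩

lemma support_subset_MM {K : ℕ} {l : Ptn} (h : psize l ≤ K) : l.support ⊆ MM K := by
  intro m hm
  have := le_psize_of_mem_support hm
  simp only [MM, Finset.mem_Iic]
  exact Finset.mem_Iic.2 (PNat.coe_le_coe m ⟨K + 1, K.succ_pos⟩ |>.1 (by show (m:ℕ) ≤ K + 1; omega))

-- extension lemmas
lemma tFn_ext (hN : 1 ≤ N) (l : Ptn) {M : Finset ℕ+} (hM : l.support ⊆ M) :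
    tFn N ζ l = 1 + ∑ m ∈ M, cc ζ m * II N m (l m) := by
  unfold tFn cc II
  congr 1
  exact Finset.sum_subset hM (fun m _ hm => by
    rw [Finsupp.notMem_support_iff.1 hm]
    have h1 : ¬ (N * (m:ℕ) ≤ 0) := by
      simp only [Nat.le_zero, Nat.mul_eq_zero, not_or]
      exact ⟨by omega, m.ne_zero⟩
    simp [h1])

lemma sHat_ext (l : Ptn) {M : Finset ℕ+} (hM : l.support ⊆ M) :
    sHat ρ ξ l = (1 / (1 - ρ) + ξ / (1 - ξ)) + ∑ m ∈ M, gg ρ ξ m (l m) := by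
  unfold sHat gg hh
  congr 1
  exact Finset.sum_subset hM (fun m _ hm => by
    rw [Finsupp.notMem_support_iff.1 hm]; simp)

-- involution lemmas
lemma sum_Qfin_swap (K : ℕ) (G : Ptn → Ptn → ℂ) :
    ∑ p ∈ Qfin K, G p.1 p.2 = ∑ p ∈ Qfin K, G p.2 p.1 := by
  apply Finset.sum_nbij' (fun p => Prod.swap p) (fun p => Prod.swap p) <;>
    simp [mem_Qfin, add_comm]

def sig (m : ℕ+) (p : Ptn × Ptn) : Ptn × Ptn :=
  (p.1.update m (p.2 m), p.2.update m (p.1 m))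

lemma update_apply' (l : Ptn) (m m' : ℕ+) (v : ℕ) :
    (l.update m v) m' = if m' = m then v else l m' := by
  rw [Finsupp.coe_update]; exact Function.update_apply l m v m'

lemma sig_mem {K : ℕ} (m : ℕ+) {p : Ptn × Ptn} (hp : p ∈ Qfin K) : sig m p ∈ Qfin K := by
  rw [mem_Qfin] at hp ⊢
  have h1 := psize_update p.1 m (p.2 m)
  have h2 := psize_update p.2 m (p.1 m)
  simp only [sig]
  omega

lemma update_update (m : ℕ+) (x y : Ptn) :
    (x.update m (y m)).update m ((y.update m (x m)) m) = x := by
  ext m'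
  by_cases h : m' = m <;> simp [update_apply', h]

lemma sig_sig (m : ℕ+) (p : Ptn × Ptn) : sig m (sig m p) = p := by
  obtain ⟨a, b⟩ := p
  unfold sig
  simp only [Prod.mk.injEq]
  exact ⟨update_update m a b, update_update m b a⟩

lemma sum_Qfin_sig (K : ℕ) (m : ℕ+) (G : Ptn × Ptn → ℂ) :
    ∑ p ∈ Qfin K, G p = ∑ p ∈ Qfin K, G (sig m p) := by
  apply Finset.sum_nbij' (fun p => sig m p) (fun p => sig m p)
  · exact fun p hp => sig_mem m hp
  · exact fun p hp => sig_mem m hp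
  · exact fun p _ => sig_sig m p
  · exact fun p _ => sig_sig m p
  · exact fun p _ => by rw [sig_sig]

-- vanishing lemmas
lemma vanish1 (K : ℕ) (m' : ℕ+) :
    ∑ p ∈ Qfin K, (gg ρ ξ m' (p.1 m') - gg ρ ξ m' (p.2 m')) = 0 := by
  have h := sum_Qfin_swap K (fun a b => gg ρ ξ m' (a m') - gg ρ ξ m' (b m'))
  have hz : ∑ p ∈ Qfin K, ((gg ρ ξ m' (p.1 m') - gg ρ ξ m' (p.2 m'))
      + (gg ρ ξ m' (p.2 m') - gg ρ ξ m' (p.1 m'))) = 0 :=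
    Finset.sum_eq_zero fun p _ => by ring
  rw [Finset.sum_add_distrib, ← h] at hz
  exact add_self_eq_zero.1 hz

lemma vanish2 (K : ℕ) {m m' : ℕ+} (hmm : m ≠ m') :
    ∑ p ∈ Qfin K, II N m (p.1 m) * (gg ρ ξ m' (p.1 m') - gg ρ ξ m' (p.2 m')) = 0 := by
  have h := sum_Qfin_sig K m' (fun p => II N m (p.1 m) * (gg ρ ξ m' (p.1 m') - gg ρ ξ m' (p.2 m')))
  have h2 : ∀ p ∈ Qfin K,
      II N m ((sig m' p).1 m) * (gg ρ ξ m' ((sig m' p).1 m') - gg ρ ξ m' ((sig m' p).2 m'))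
      = -(II N m (p.1 m) * (gg ρ ξ m' (p.1 m') - gg ρ ξ m' (p.2 m'))) := by
    intro p _
    simp only [sig]
    rw [update_apply', update_apply', update_apply']
    rw [if_neg hmm, if_pos rfl, if_pos rfl]
    ring
  have hz : ∑ p ∈ Qfin K, ((II N m (p.1 m) * (gg ρ ξ m' (p.1 m') - gg ρ ξ m' (p.2 m')))
      + II N m ((sig m' p).1 m) * (gg ρ ξ m' ((sig m' p).1 m') - gg ρ ξ m' ((sig m' p).2 m'))) = 0 :=
    Finset.sum_eq_zero fun p hp => by rw [h2 p hp]; ring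
  rw [Finset.sum_add_distrib, ← h] at hz
  exact add_self_eq_zero.1 hz

-- main reduction
lemma reduction (hN : 1 ≤ N) (K : ℕ) :
    ∑ p ∈ Qfin K, (tFn N ζ p.1 * sHat ρ ξ p.1 - tFn N ζ p.1 * sHat ρ ξ p.2)
    = ∑ m ∈ MM K, cc ζ m *
        ∑ p ∈ Qfin K, II N m (p.1 m) * (gg ρ ξ m (p.1 m) - gg ρ ξ m (p.2 m)) := by
  have step1 : ∀ p ∈ Qfin K,
      tFn N ζ p.1 * sHat ρ ξ p.1 - tFn N ζ p.1 * sHat ρ ξ p.2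
      = (∑ m' ∈ MM K, (gg ρ ξ m' (p.1 m') - gg ρ ξ m' (p.2 m')))
        + ∑ m ∈ MM K, ∑ m' ∈ MM K,
            cc ζ m * (II N m (p.1 m) * (gg ρ ξ m' (p.1 m') - gg ρ ξ m' (p.2 m'))) := by
    intro p hp
    rw [mem_Qfin] at hp
    have hs1 : p.1.support ⊆ MM K := support_subset_MM (by omega)
    have hs2 : p.2.support ⊆ MM K := support_subset_MM (by omega)
    rw [tFn_ext N ζ hN p.1 hs1, sHat_ext ρ ξ p.1 hs1, sHat_ext ρ ξ p.2 hs2]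
    rw [← mul_sub]
    have : ((1 / (1 - ρ) + ξ / (1 - ξ)) + ∑ m ∈ MM K, gg ρ ξ m (p.1 m))
        - ((1 / (1 - ρ) + ξ / (1 - ξ)) + ∑ m ∈ MM K, gg ρ ξ m (p.2 m))
        = ∑ m' ∈ MM K, (gg ρ ξ m' (p.1 m') - gg ρ ξ m' (p.2 m')) := by
      rw [Finset.sum_sub_distrib]; ring
    rw [this, add_mul, one_mul, Finset.sum_mul]
    congr 1
    apply Finset.sum_congr rfl
    intro m _
    rw [Finset.mul_sum]
    apply Finset.sum_congr rfl
    intro m' _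
    ring
  rw [Finset.sum_congr rfl step1, Finset.sum_add_distrib]
  have t1 : ∑ p ∈ Qfin K, ∑ m' ∈ MM K, (gg ρ ξ m' (p.1 m') - gg ρ ξ m' (p.2 m')) = 0 := by
    rw [Finset.sum_comm]
    exact Finset.sum_eq_zero fun m' _ => vanish1 ρ ξ K m'
  rw [t1, zero_add]
  rw [Finset.sum_comm]
  apply Finset.sum_congr rfl
  intro m hm
  rw [Finset.sum_comm]
  have : ∀ m' ∈ MM K, ∑ p ∈ Qfin K,
      cc ζ m * (II N m (p.1 m) * (gg ρ ξ m' (p.1 m') - gg ρ ξ m' (p.2 m')))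
      = if m' = m then cc ζ m * ∑ p ∈ Qfin K,
          II N m (p.1 m) * (gg ρ ξ m (p.1 m) - gg ρ ξ m (p.2 m)) else 0 := by
    intro m' _
    split
    · rename_i h; subst h; rw [Finset.mul_sum]
    · rename_i h
      rw [← Finset.mul_sum, vanish2 N ρ ξ K (fun hh => h hh.symm), mul_zero]
  rw [Finset.sum_congr rfl this, Finset.sum_ite_eq' (MM K) m]
  rw [if_pos hm]

end Red
-- part 3: factorization
def Psi (m : ℕ+) (f0 : ℕ → ℂ) : PowerSeries ℂ :=
  PowerSeries.mk fun n => if (m : ℕ) ∣ n then f0 (n / (m : ℕ)) else 0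

def Em (m : ℕ+) : PowerSeries ℂ := qseries (fun l => if l m = 0 then 1 else 0)

lemma qseries_factor (m : ℕ+) (f0 : ℕ → ℂ) :
    qseries (fun l => f0 (l m)) = Psi m f0 * Em m := by
  ext n
  rw [coeff_qseries, PowerSeries.coeff_mul]
  have hstep : ∀ uv ∈ Finset.HasAntidiagonal.antidiagonal n,
      PowerSeries.coeff uv.1 (Psi m f0) * PowerSeries.coeff uv.2 (Em m)
      = ∑ l' ∈ Pfin uv.2,
          (if (m : ℕ) ∣ uv.1 then f0 (uv.1 / (m : ℕ)) else 0) * (if l' m = 0 then 1 else 0) := by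
    intro uv _
    rw [Em, coeff_qseries, Psi, PowerSeries.coeff_mk, Finset.mul_sum]
  rw [Finset.sum_congr rfl hstep]
  rw [Finset.sum_sigma' (Finset.HasAntidiagonal.antidiagonal n) (fun uv => Pfin uv.2)
    (fun uv l' => (if (m : ℕ) ∣ uv.1 then f0 (uv.1 / (m : ℕ)) else 0) * (if l' m = 0 then 1 else 0))]
  have hfil : ∑ x ∈ ((Finset.HasAntidiagonal.antidiagonal n).sigma fun uv => Pfin uv.2).filter
        (fun x => (m : ℕ) ∣ x.1.1 ∧ x.2 m = 0),
        ((if (m : ℕ) ∣ x.1.1 then f0 (x.1.1 / (m : ℕ)) else 0) * (if x.2 m = 0 then 1 else 0))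
      = ∑ x ∈ ((Finset.HasAntidiagonal.antidiagonal n).sigma fun uv => Pfin uv.2),
        ((if (m : ℕ) ∣ x.1.1 then f0 (x.1.1 / (m : ℕ)) else 0) * (if x.2 m = 0 then 1 else 0)) :=
    Finset.sum_filter_of_ne (fun x _ hne => by
      constructor
      · by_contra hd; rw [if_neg hd, zero_mul] at hne; exact hne rfl
      · by_contra hd; rw [if_neg hd, mul_zero] at hne; exact hne rfl)
  rw [← hfil]
  apply Finset.sum_nbij' (i := fun l => (⟨((m : ℕ) * l m, psize (l.erase m)), l.erase m⟩ :
      Σ _ : ℕ × ℕ, Ptn)) (j := fun x => x.2 + Finsupp.single m (x.1.1 / (m : ℕ)))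
  · intro l hl
    rw [mem_Pfin] at hl
    refine Finset.mem_filter.2 ⟨Finset.mem_sigma.2 ⟨Finset.HasAntidiagonal.mem_antidiagonal.2 ?_, mem_Pfin.2 rfl⟩,
      ⟨Dvd.intro _ rfl, Finsupp.erase_same⟩⟩
    have := psize_erase_add l m
    dsimp only
    omega
  · intro x hx
    simp only [Finset.mem_filter, Finset.mem_sigma, Finset.HasAntidiagonal.mem_antidiagonal, mem_Pfin] at hx
    obtain ⟨⟨h1, h2⟩, h3, h4⟩ := hx
    rw [mem_Pfin, psize_add, psize_single, h2, Nat.mul_div_cancel' h3]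
    omega
  · intro l hl
    have h1 : ((m : ℕ) * l m) / (m : ℕ) = l m := Nat.mul_div_cancel_left _ m.pos
    simp only [h1]
    exact Finsupp.erase_add_single m l
  · intro x hx
    simp only [Finset.mem_filter, Finset.mem_sigma, Finset.HasAntidiagonal.mem_antidiagonal, mem_Pfin] at hx
    obtain ⟨⟨h1, h2⟩, h3, h4⟩ := hx
    obtain ⟨⟨u, v⟩, l'⟩ := x
    dsimp only at h1 h2 h3 h4 ⊢
    have happ : (l' + Finsupp.single m (u / (m : ℕ))) m = u / (m : ℕ) := by
      rw [Finsupp.add_apply, h4, Finsupp.single_eq_same, zero_add]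
    have herase : (l' + Finsupp.single m (u / (m : ℕ))).erase m = l' := by
      ext m'
      by_cases h : m' = m
      · subst h; rw [Finsupp.erase_same, h4]
      · rw [Finsupp.erase_ne h, Finsupp.add_apply, Finsupp.single_eq_of_ne h,
          add_zero]
    have hmul : (m : ℕ) * (u / (m : ℕ)) = u := Nat.mul_div_cancel' h3
    rw [happ, herase, hmul, h2]
  · intro l hl
    have h1 : ((m : ℕ) * l m) / (m : ℕ) = l m := Nat.mul_div_cancel_left _ m.pos
    rw [if_pos (Dvd.intro _ rfl), if_pos Finsupp.erase_same, h1, mul_one]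

def cnv (a b : ℕ → ℂ) (S : ℕ) : ℂ := ∑ st ∈ Finset.HasAntidiagonal.antidiagonal S, a st.1 * b st.2

lemma Psi_mul (m : ℕ+) (a b : ℕ → ℂ) : Psi m a * Psi m b = Psi m (cnv a b) := by
  ext K
  rw [PowerSeries.coeff_mul]
  simp only [Psi, PowerSeries.coeff_mk]
  by_cases hK : (m : ℕ) ∣ K
  · rw [if_pos hK, cnv]
    rw [← Finset.sum_filter_of_ne (p := fun uv : ℕ × ℕ => (m : ℕ) ∣ uv.1 ∧ (m : ℕ) ∣ uv.2)
      (fun x _ hne => by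
        constructor
        · by_contra hd; rw [if_neg hd, zero_mul] at hne; exact hne rfl
        · by_contra hd; rw [if_neg hd, mul_zero] at hne; exact hne rfl)]
    apply Finset.sum_nbij' (i := fun uv => (uv.1 / (m : ℕ), uv.2 / (m : ℕ)))
      (j := fun st => ((m : ℕ) * st.1, (m : ℕ) * st.2))
    · intro uv huv
      simp only [Finset.mem_filter, Finset.HasAntidiagonal.mem_antidiagonal] at huv
      obtain ⟨h1, h2, h3⟩ := huv
      obtain ⟨s, hs⟩ := h2
      obtain ⟨t, ht⟩ := h3
      simp only [Finset.HasAntidiagonal.mem_antidiagonal]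
      have hm := m.pos
      have hK2 : K = (m : ℕ) * (s + t) := by rw [← h1, hs, ht, Nat.mul_add]
      rw [hs, ht, hK2, Nat.mul_div_cancel_left _ hm, Nat.mul_div_cancel_left _ hm,
        Nat.mul_div_cancel_left _ hm]
    · intro st hst
      simp only [Finset.HasAntidiagonal.mem_antidiagonal] at hst
      simp only [Finset.mem_filter, Finset.HasAntidiagonal.mem_antidiagonal]
      refine ⟨?_, Dvd.intro _ rfl, Dvd.intro _ rfl⟩
      obtain ⟨k, hk⟩ := hK
      rw [← Nat.mul_add, hst, hk, Nat.mul_div_cancel_left _ m.pos]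
    · intro uv huv
      simp only [Finset.mem_filter] at huv
      obtain ⟨_, h2, h3⟩ := huv
      ext <;> simp [Nat.mul_div_cancel' h2, Nat.mul_div_cancel' h3]
    · intro st _
      have hm := m.pos
      ext <;> simp [Nat.mul_div_cancel_left _ hm]
    · intro uv huv
      simp only [Finset.mem_filter] at huv
      rw [if_pos huv.2.1, if_pos huv.2.2]
  · rw [if_neg hK]
    apply Finset.sum_eq_zero
    intro uv huv
    simp only [Finset.HasAntidiagonal.mem_antidiagonal] at huv
    by_cases h1 : (m : ℕ) ∣ uv.1
    · have h2 : ¬ (m : ℕ) ∣ uv.2 := fun h2 => hK (huv ▸ Nat.dvd_add h1 h2)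
      rw [if_neg h2, mul_zero]
    · rw [if_neg h1, zero_mul]

lemma Psi_congr (m : ℕ+) {a b : ℕ → ℂ} (h : ∀ S, a S = b S) : Psi m a = Psi m b := by
  rw [funext h]

lemma Psi_sub (m : ℕ+) (a b : ℕ → ℂ) :
    Psi m a - Psi m b = Psi m (fun S => a S - b S) := by
  ext n
  simp only [map_sub, Psi, PowerSeries.coeff_mk]
  split <;> simp

-- part 4: per-m scalar identity
def rt (N : ℕ) (ρ ξ : ℂ) (m : ℕ+) (u : ℕ) : ℂ :=
  if u = N * (m : ℕ) then gg ρ ξ m (N * (m : ℕ))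
  else if N * (m : ℕ) < u then hh ρ ξ m u - hh ρ ξ m (u - N * (m : ℕ)) else 0

lemma rt_small (N : ℕ) (ρ ξ : ℂ) (m : ℕ+) {u : ℕ} (h : u < N * (m : ℕ)) :
    rt N ρ ξ m u = 0 := by
  rw [rt, if_neg (show ¬ u = N * (m : ℕ) by omega), if_neg (show ¬ N * (m : ℕ) < u by omega)]

lemma rt_eq (N : ℕ) (ρ ξ : ℂ) (m : ℕ+) {u : ℕ} (h : u = N * (m : ℕ)) :
    rt N ρ ξ m u = gg ρ ξ m (N * (m : ℕ)) := by
  rw [rt, if_pos h]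

lemma rt_big (N : ℕ) (ρ ξ : ℂ) (m : ℕ+) {u : ℕ} (h : N * (m : ℕ) < u) :
    rt N ρ ξ m u = hh ρ ξ m u - hh ρ ξ m (u - N * (m : ℕ)) := by
  rw [rt, if_neg (show ¬ u = N * (m : ℕ) by omega), if_pos h]

lemma sum_rt (N : ℕ) (ρ ξ : ℂ) (m : ℕ+) (hn : 1 ≤ N * (m : ℕ)) (S : ℕ) :
    ∑ k ∈ Finset.range (S + 1), rt N ρ ξ m k
    = if N * (m : ℕ) ≤ S then gg ρ ξ m S - gg ρ ξ m (S - N * (m : ℕ)) else 0 := by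
  induction S with
  | zero =>
    rw [Finset.sum_range_succ, Finset.sum_range_zero, zero_add,
      rt_small N ρ ξ m (show 0 < N * (m:ℕ) by omega),
      if_neg (show ¬ N * (m : ℕ) ≤ 0 by omega)]
  | succ S ih =>
    rw [Finset.sum_range_succ, ih]
    rcases lt_trichotomy (S + 1) (N * (m : ℕ)) with h | h | h
    · rw [if_neg (show ¬ N * (m : ℕ) ≤ S by omega),
        if_neg (show ¬ N * (m : ℕ) ≤ S + 1 by omega), rt_small N ρ ξ m h]
      ring
    · rw [if_neg (show ¬ N * (m : ℕ) ≤ S by omega),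
        if_pos (show N * (m : ℕ) ≤ S + 1 by omega), rt_eq N ρ ξ m h, ← h]
      simp [gg_zero]
    · rw [if_pos (show N * (m : ℕ) ≤ S by omega),
        if_pos (show N * (m : ℕ) ≤ S + 1 by omega), rt_big N ρ ξ m h]
      have e1 : gg ρ ξ m (S + 1) = gg ρ ξ m S + hh ρ ξ m (S + 1) := gg_succ ρ ξ m S
      have e2 : S + 1 - N * (m : ℕ) = (S - N * (m : ℕ)) + 1 := by omega
      have e3 : gg ρ ξ m ((S - N * (m : ℕ)) + 1)
          = gg ρ ξ m (S - N * (m : ℕ)) + hh ρ ξ m ((S - N * (m : ℕ)) + 1) := gg_succ ρ ξ m _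
      rw [e2, e3, e1, ← e2]
      ring

lemma conv_eq_range (a b : ℕ → ℂ) (S : ℕ) :
    cnv a b S = ∑ k ∈ Finset.range (S + 1), a k * b (S - k) :=
  Finset.Nat.sum_antidiagonal_eq_sum_range_succ_mk _ S

lemma main_scalar (N : ℕ) (ρ ξ : ℂ) (m : ℕ+) (hn : 1 ≤ N * (m : ℕ)) (S : ℕ) :
    (∑ k ∈ Finset.Icc (N * (m : ℕ)) S, gg ρ ξ m k)
      - (∑ t ∈ Finset.range (S + 1 - N * (m : ℕ)), gg ρ ξ m t)
    = ∑ k ∈ Finset.range (S + 1), rt N ρ ξ m k * (((S - k) + 1 : ℕ) : ℂ) := by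
  induction S with
  | zero =>
    rw [Finset.Icc_eq_empty (by omega), Finset.sum_empty]
    have h1 : 0 + 1 - N * (m : ℕ) = 0 := by omega
    rw [h1, Finset.range_zero, Finset.sum_empty]
    rw [Finset.sum_range_succ, Finset.sum_range_zero,
      rt_small N ρ ξ m (show 0 < N * (m:ℕ) by omega)]
    ring
  | succ S ih =>
    have hrhs : ∑ k ∈ Finset.range (S + 2), rt N ρ ξ m k * (((S + 1 - k) + 1 : ℕ) : ℂ)
        = (∑ k ∈ Finset.range (S + 1), rt N ρ ξ m k * (((S - k) + 1 : ℕ) : ℂ))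
          + ∑ k ∈ Finset.range (S + 2), rt N ρ ξ m k := by
      rw [Finset.sum_range_succ (n := S + 1), Finset.sum_range_succ (n := S + 1)]
      have h0 : ((S + 1 - (S + 1)) + 1 : ℕ) = 1 := by omega
      have : ∀ k ∈ Finset.range (S + 1),
          rt N ρ ξ m k * (((S + 1 - k) + 1 : ℕ) : ℂ)
          = rt N ρ ξ m k * (((S - k) + 1 : ℕ) : ℂ) + rt N ρ ξ m k := by
        intro k hk
        rw [Finset.mem_range] at hk
        have h2 : (S + 1 - k) + 1 = ((S - k) + 1) + 1 := by omega
        rw [h2]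
        push_cast
        ring
      rw [Finset.sum_congr rfl this, Finset.sum_add_distrib, h0]
      push_cast
      ring
    rw [hrhs, ← ih, sum_rt N ρ ξ m hn]
    by_cases hc : N * (m : ℕ) ≤ S + 1
    · rw [if_pos hc, Finset.sum_Icc_succ_top hc]
      have h2 : S + 1 + 1 - N * (m : ℕ) = (S + 1 - N * (m : ℕ)) + 1 := by omega
      rw [h2, Finset.sum_range_succ]
      ring
    · rw [if_neg hc, Finset.Icc_eq_empty hc, Finset.Icc_eq_empty (by omega)]
      have h2 : S + 1 + 1 - N * (m : ℕ) = 0 := by omega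
      have h3 : S + 1 - N * (m : ℕ) = 0 := by omega
      rw [h2, h3]
      ring

lemma scalar (N : ℕ) (ρ ξ : ℂ) (m : ℕ+) (hn : 1 ≤ N * (m : ℕ)) (S : ℕ) :
    cnv (fun a => II N m a * gg ρ ξ m a) (fun _ => 1) S - cnv (II N m) (gg ρ ξ m) S
    = cnv (rt N ρ ξ m) (cnv (fun _ => 1) (fun _ => 1)) S := by
  rw [conv_eq_range, conv_eq_range, conv_eq_range]
  have hA : ∑ k ∈ Finset.range (S + 1), (II N m k * gg ρ ξ m k) * (fun _ => (1:ℂ)) (S - k)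
      = ∑ k ∈ Finset.Icc (N * (m : ℕ)) S, gg ρ ξ m k := by
    have h1 : ∀ k ∈ Finset.range (S + 1), (II N m k * gg ρ ξ m k) * (fun _ => (1:ℂ)) (S - k)
        = if N * (m : ℕ) ≤ k then gg ρ ξ m k else 0 := by
      intro k _
      simp only [II]
      split <;> simp
    rw [Finset.sum_congr rfl h1, ← Finset.sum_filter]
    congr 1
    ext k
    simp only [Finset.mem_filter, Finset.mem_range, Finset.mem_Icc]
    omega
  have hB : ∑ k ∈ Finset.range (S + 1), II N m k * gg ρ ξ m (S - k)
      = ∑ t ∈ Finset.range (S + 1 - N * (m : ℕ)), gg ρ ξ m t := by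
    have h1 : ∀ k ∈ Finset.range (S + 1), II N m k * gg ρ ξ m (S - k)
        = if N * (m : ℕ) ≤ k then gg ρ ξ m (S - k) else 0 := by
      intro k _
      simp only [II]
      split <;> simp
    rw [Finset.sum_congr rfl h1, ← Finset.sum_filter]
    apply Finset.sum_nbij' (i := fun k => S - k) (j := fun t => S - t)
    · intro k hk
      simp only [Finset.mem_filter, Finset.mem_range] at hk ⊢
      omega
    · intro t ht
      simp only [Finset.mem_filter, Finset.mem_range] at ht ⊢
      omega
    · intro k hk
      simp only [Finset.mem_filter, Finset.mem_range] at hk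
      omega
    · intro t ht
      simp only [Finset.mem_range] at ht
      omega
    · intro k _
      rfl
  have hC : ∀ k ∈ Finset.range (S + 1),
      rt N ρ ξ m k * cnv (fun _ => (1:ℂ)) (fun _ => 1) (S - k)
      = rt N ρ ξ m k * (((S - k) + 1 : ℕ) : ℂ) := by
    intro k _
    congr 1
    rw [cnv]
    rw [Finset.sum_const]
    simp [Nat.card_antidiagonal]
  rw [hA, hB, Finset.sum_congr rfl hC]
  exact main_scalar N ρ ξ m hn S

-- part 4b: the per-m series identity
lemma Am_eq (N : ℕ) (ρ ξ : ℂ) (m : ℕ+) (hn : 1 ≤ N * (m : ℕ)) :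
    (PowerSeries.mk fun K =>
        ∑ p ∈ Qfin K, II N m (p.1 m) * (gg ρ ξ m (p.1 m) - gg ρ ξ m (p.2 m)))
    = Psi m (rt N ρ ξ m) * ((qseries fun _ => 1) * (qseries fun _ => 1)) := by
  have e1 := qseries_factor m (fun a => II N m a * gg ρ ξ m a)
  have e2 := qseries_factor m (II N m)
  have e3 := qseries_factor m (gg ρ ξ m)
  have e4 : (qseries fun _ => (1:ℂ)) = Psi m (fun _ => 1) * Em m := qseries_factor m (fun _ => 1)
  have key : Psi m (fun a => II N m a * gg ρ ξ m a) * Psi m (fun _ => 1)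
      - Psi m (II N m) * Psi m (gg ρ ξ m)
      = Psi m (rt N ρ ξ m) * (Psi m (fun _ => 1) * Psi m (fun _ => 1)) := by
    rw [Psi_mul, Psi_mul, Psi_sub, Psi_mul, Psi_mul]
    exact Psi_congr m (fun S => scalar N ρ ξ m hn S)
  have lhs_eq : (PowerSeries.mk fun K =>
        ∑ p ∈ Qfin K, II N m (p.1 m) * (gg ρ ξ m (p.1 m) - gg ρ ξ m (p.2 m)))
      = qseries (fun l => II N m (l m) * gg ρ ξ m (l m)) * qseries (fun _ => 1)
        - qseries (fun l => II N m (l m)) * qseries (fun l => gg ρ ξ m (l m)) := by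
    ext K
    rw [map_sub, coeff_mul_qseries, coeff_mul_qseries, PowerSeries.coeff_mk,
      ← Finset.sum_sub_distrib]
    exact Finset.sum_congr rfl fun p _ => by ring
  rw [lhs_eq, e1, e2, e3, e4]
  linear_combination (Em m * Em m) * key

-- part 5: RHS matching
lemma coeff_Psi_rt (N : ℕ) (ρ ξ : ℂ) (m : ℕ+) (n : ℕ) :
    PowerSeries.coeff n (Psi m (rt N ρ ξ m))
    = if (m : ℕ) ∣ n then rt N ρ ξ m (n / (m : ℕ)) else 0 := by
  rw [Psi, PowerSeries.coeff_mk]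

lemma psi_vanish (N : ℕ) (hN : 1 ≤ N) (ρ ξ : ℂ) (m : ℕ+) (n : ℕ) (h : n < (m : ℕ)) :
    PowerSeries.coeff n (Psi m (rt N ρ ξ m)) = 0 := by
  rw [coeff_Psi_rt]
  split
  · rename_i hd
    rcases Nat.eq_zero_or_pos n with h0 | h0
    · subst h0
      simp only [Nat.zero_div]
      exact rt_small N ρ ξ m (Nat.mul_pos hN m.pos)
    · exact absurd (Nat.le_of_dvd h0 hd) (by omega)
  · rfl

lemma m_le_of_sq (N : ℕ) (hN : 1 ≤ N) (m : ℕ+) : (m : ℕ) ≤ N * (m : ℕ) ^ 2 := by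
  have h1 : (1:ℕ) ≤ (m:ℕ) := m.pos
  calc (m:ℕ) = 1 * ((m:ℕ) * 1) := by ring
    _ ≤ N * ((m:ℕ) * (m:ℕ)) := by
        apply Nat.mul_le_mul hN
        exact Nat.mul_le_mul_left _ h1
    _ = N * (m:ℕ)^2 := by ring

lemma term1_vanish (N : ℕ) (hN : 1 ≤ N) (ζ ρ ξ : ℂ) (K : ℕ) (m : ℕ+) (hm : K < (m : ℕ)) :
    (ζ ^ (m : ℕ) + ζ ^ (-((m : ℕ) : ℤ))) * ρ ^ (m : ℕ) *
      ((if K = N * (m : ℕ) ^ 2 then ∑ j ∈ Finset.Icc 1 (N * (m : ℕ)), ξ ^ j else 0) +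
        ∑' r : ℕ, if N * (m : ℕ) < r ∧ K = (m : ℕ) * r then
          ξ ^ r - ξ ^ (r - N * (m : ℕ)) else 0) = 0 := by
  have h1 : ¬ (K = N * (m : ℕ) ^ 2) := by
    have := m_le_of_sq N hN m
    omega
  have h2 : ∀ r : ℕ, (if N * (m : ℕ) < r ∧ K = (m : ℕ) * r then
      ξ ^ r - ξ ^ (r - N * (m : ℕ)) else (0:ℂ)) = 0 := by
    intro r
    rw [if_neg]
    rintro ⟨hr1, hr2⟩
    have h3 : 1 ≤ r := by omega
    have : (m : ℕ) * 1 ≤ (m : ℕ) * r := Nat.mul_le_mul_left _ h3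
    omega
  rw [if_neg h1, tsum_congr h2, tsum_zero]
  ring

lemma term2_vanish (N : ℕ) (hN : 1 ≤ N) (ζ ρ ξ : ℂ) (K : ℕ) (m : ℕ+) (hm : K < (m : ℕ)) :
    (ζ ^ (m : ℕ) + ζ ^ (-((m : ℕ) : ℤ))) * ρ ^ (-((m : ℕ) : ℤ)) *
      ((if K = N * (m : ℕ) ^ 2 then ∑ j ∈ Finset.Icc 1 (N * (m : ℕ)), ξ ^ (-(j : ℤ)) else 0) +
        ∑' r : ℕ, if N * (m : ℕ) < r ∧ K = (m : ℕ) * r then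
          ξ ^ (-(r : ℤ)) - ξ ^ (-(r : ℤ) + (N * (m : ℕ) : ℤ)) else 0) = 0 := by
  have h1 : ¬ (K = N * (m : ℕ) ^ 2) := by
    have := m_le_of_sq N hN m
    omega
  have h2 : ∀ r : ℕ, (if N * (m : ℕ) < r ∧ K = (m : ℕ) * r then
      ξ ^ (-(r : ℤ)) - ξ ^ (-(r : ℤ) + (N * (m : ℕ) : ℤ)) else (0:ℂ)) = 0 := by
    intro r
    rw [if_neg]
    rintro ⟨hr1, hr2⟩
    have h3 : 1 ≤ r := by omega
    have : (m : ℕ) * 1 ≤ (m : ℕ) * r := Nat.mul_le_mul_left _ h3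
    omega
  rw [if_neg h1, tsum_congr h2, tsum_zero]
  ring

lemma term_eq (N : ℕ) (hN : 1 ≤ N) (ζ ρ ξ : ℂ) (K : ℕ) (m : ℕ+) :
    (ζ ^ (m : ℕ) + ζ ^ (-((m : ℕ) : ℤ))) * ρ ^ (m : ℕ) *
      ((if K = N * (m : ℕ) ^ 2 then ∑ j ∈ Finset.Icc 1 (N * (m : ℕ)), ξ ^ j else 0) +
        ∑' r : ℕ, if N * (m : ℕ) < r ∧ K = (m : ℕ) * r then
          ξ ^ r - ξ ^ (r - N * (m : ℕ)) else 0)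
    - (ζ ^ (m : ℕ) + ζ ^ (-((m : ℕ) : ℤ))) * ρ ^ (-((m : ℕ) : ℤ)) *
      ((if K = N * (m : ℕ) ^ 2 then ∑ j ∈ Finset.Icc 1 (N * (m : ℕ)), ξ ^ (-(j : ℤ)) else 0) +
        ∑' r : ℕ, if N * (m : ℕ) < r ∧ K = (m : ℕ) * r then
          ξ ^ (-(r : ℤ)) - ξ ^ (-(r : ℤ) + (N * (m : ℕ) : ℤ)) else 0)
    = cc ζ m * PowerSeries.coeff K (Psi m (rt N ρ ξ m)) := by
  rw [coeff_Psi_rt, cc]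
  have hts1 : (∑' r : ℕ, if N * (m : ℕ) < r ∧ K = (m : ℕ) * r then
      ξ ^ r - ξ ^ (r - N * (m : ℕ)) else (0:ℂ))
      = if N * (m : ℕ) < K / (m : ℕ) ∧ K = (m : ℕ) * (K / (m : ℕ)) then
          ξ ^ (K / (m : ℕ)) - ξ ^ (K / (m : ℕ) - N * (m : ℕ)) else 0 := by
    apply tsum_eq_single
    intro r hr
    rw [if_neg]
    rintro ⟨_, h2⟩
    exact hr (by rw [h2, Nat.mul_div_cancel_left _ m.pos])
  have hts2 : (∑' r : ℕ, if N * (m : ℕ) < r ∧ K = (m : ℕ) * r then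
      ξ ^ (-(r : ℤ)) - ξ ^ (-(r : ℤ) + (N * (m : ℕ) : ℤ)) else (0:ℂ))
      = if N * (m : ℕ) < K / (m : ℕ) ∧ K = (m : ℕ) * (K / (m : ℕ)) then
          ξ ^ (-((K / (m : ℕ) : ℕ)) : ℤ) - ξ ^ (-((K / (m : ℕ) : ℕ)) + (N * (m : ℕ) : ℕ) : ℤ) else 0 := by
    apply tsum_eq_single
    intro r hr
    rw [if_neg]
    rintro ⟨_, h2⟩
    exact hr (by rw [h2, Nat.mul_div_cancel_left _ m.pos])
  rw [hts1, hts2]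
  by_cases hd : (m : ℕ) ∣ K
  · obtain ⟨u, hu⟩ := hd
    have hdiv : K / (m : ℕ) = u := by rw [hu, Nat.mul_div_cancel_left _ m.pos]
    have hsq : K = N * (m : ℕ) ^ 2 ↔ u = N * (m : ℕ) := by
      rw [hu]
      constructor
      · intro h
        apply Nat.eq_of_mul_eq_mul_left m.pos
        rw [h]; ring
      · intro h; rw [h]; ring
    rw [if_pos (show ((m:ℕ)) ∣ K from ⟨u, hu⟩), hdiv]
    rcases lt_trichotomy u (N * (m : ℕ)) with h | h | h
    · rw [if_neg (show ¬ K = N * (m:ℕ)^2 from fun hc => by have := hsq.1 hc; omega),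
        if_neg (show ¬ K = N * (m:ℕ)^2 from fun hc => by have := hsq.1 hc; omega),
        if_neg (show ¬ (N * (m:ℕ) < u ∧ K = (m:ℕ) * u) from fun hc => by omega),
        if_neg (show ¬ (N * (m:ℕ) < u ∧ K = (m:ℕ) * u) from fun hc => by omega),
        rt_small N ρ ξ m h]
      ring
    · rw [if_pos (hsq.2 h), if_pos (hsq.2 h),
        if_neg (show ¬ (N * (m:ℕ) < u ∧ K = (m:ℕ) * u) from fun hc => by omega),
        if_neg (show ¬ (N * (m:ℕ) < u ∧ K = (m:ℕ) * u) from fun hc => by omega),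
        rt_eq N ρ ξ m h]
      have hg : gg ρ ξ m (N * (m : ℕ))
          = ρ ^ (m : ℕ) * (∑ j ∈ Finset.Icc 1 (N * (m : ℕ)), ξ ^ j)
            - ρ ^ (-((m : ℕ) : ℤ)) * (∑ j ∈ Finset.Icc 1 (N * (m : ℕ)), ξ ^ (-(j : ℤ))) := by
        rw [gg, Finset.mul_sum, Finset.mul_sum, ← Finset.sum_sub_distrib]
        exact Finset.sum_congr rfl fun j _ => by rw [hh]
      rw [hg]
      ring
    · rw [if_neg (show ¬ K = N * (m:ℕ)^2 from fun hc => by have := hsq.1 hc; omega),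
        if_neg (show ¬ K = N * (m:ℕ)^2 from fun hc => by have := hsq.1 hc; omega),
        if_pos (show (N * (m:ℕ) < u ∧ K = (m:ℕ) * u) from ⟨h, hu⟩),
        if_pos (show (N * (m:ℕ) < u ∧ K = (m:ℕ) * u) from ⟨h, hu⟩),
        rt_big N ρ ξ m h]
      rw [hh, hh]
      have hc1 : (-(((u - N * (m : ℕ)) : ℕ) : ℤ)) = -(u : ℤ) + ((N * (m : ℕ) : ℕ) : ℤ) := by omega
      rw [hc1]
      ring
  · have h1 : ¬ K = N * (m : ℕ) ^ 2 := fun h => hd ⟨N * (m : ℕ), by rw [h]; ring⟩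
    have h2 : ¬ (N * (m : ℕ) < K / (m : ℕ) ∧ K = (m : ℕ) * (K / (m : ℕ))) :=
      fun hc => hd ⟨K / (m : ℕ), hc.2⟩
    rw [if_neg hd, if_neg h1, if_neg h1, if_neg h2, if_neg h2]
    ring

end Aux

theorem stmt7 (N : ℕ) (hN : 1 ≤ N) (ζ ρ ξ : ℂ) (hζ : ζ ≠ 0)
    (hρ0 : ρ ≠ 0) (hρ1 : ρ ≠ 1) (hξ0 : ξ ≠ 0) (hξ1 : ξ ≠ 1) :
    qbracket (fun l => tFn N ζ l * sHat ρ ξ l) - qbracket (tFn N ζ) * qbracket (sHat ρ ξ) =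
      PowerSeries.mk fun K =>
        (∑' m : ℕ+, (ζ ^ (m : ℕ) + ζ ^ (-((m : ℕ) : ℤ))) * ρ ^ (m : ℕ) *
          ((if K = N * (m : ℕ) ^ 2 then ∑ j ∈ Finset.Icc 1 (N * (m : ℕ)), ξ ^ j else 0) +
            ∑' r : ℕ, if N * (m : ℕ) < r ∧ K = (m : ℕ) * r then
              ξ ^ r - ξ ^ (r - N * (m : ℕ)) else 0)) -
        ∑' m : ℕ+, (ζ ^ (m : ℕ) + ζ ^ (-((m : ℕ) : ℤ))) * ρ ^ (-((m : ℕ) : ℤ)) *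
          ((if K = N * (m : ℕ) ^ 2 then ∑ j ∈ Finset.Icc 1 (N * (m : ℕ)), ξ ^ (-(j : ℤ)) else 0) +
            ∑' r : ℕ, if N * (m : ℕ) < r ∧ K = (m : ℕ) * r then
              ξ ^ (-(r : ℤ)) - ξ ^ (-(r : ℤ) + (N * (m : ℕ) : ℤ)) else 0) := by
  have hDc : PowerSeries.constantCoeff (qseries fun _ => (1:ℂ)) = 1 := by
    have h0 := coeff_qseries (fun _ => (1:ℂ)) 0
    rw [Pfin_zero, Finset.sum_singleton] at h0
    rwa [PowerSeries.coeff_zero_eq_constantCoeff] at h0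
  have hDne : (qseries fun _ => (1:ℂ)) ≠ 0 := by
    intro h
    rw [h, map_zero] at hDc
    exact zero_ne_one hDc
  have hinv : (qseries fun _ => (1:ℂ)) * (qseries fun _ => (1:ℂ))⁻¹ = 1 :=
    PowerSeries.mul_inv_cancel _ (by rw [hDc]; exact one_ne_zero)
  apply mul_right_cancel₀ (mul_ne_zero hDne hDne)
  have expand : (qbracket (fun l => tFn N ζ l * sHat ρ ξ l)
        - qbracket (tFn N ζ) * qbracket (sHat ρ ξ))
        * ((qseries fun _ => (1:ℂ)) * (qseries fun _ => (1:ℂ)))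
      = qseries (fun l => tFn N ζ l * sHat ρ ξ l) * (qseries fun _ => (1:ℂ))
        - qseries (tFn N ζ) * qseries (sHat ρ ξ) := by
    rw [qbracket, qbracket, qbracket]
    linear_combination (qseries (fun l => tFn N ζ l * sHat ρ ξ l) * (qseries fun _ => (1:ℂ))
      - qseries (tFn N ζ) * qseries (sHat ρ ξ) *
        ((qseries fun _ => (1:ℂ)) * (qseries fun _ => (1:ℂ))⁻¹ + 1)) * hinv
  rw [expand]
  ext K
  trans (∑ m ∈ MM K, cc ζ m *
      ∑ p ∈ Qfin K, II N m (p.1 m) * (gg ρ ξ m (p.1 m) - gg ρ ξ m (p.2 m)))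
  · rw [map_sub, coeff_mul_qseries, coeff_mul_qseries, ← Finset.sum_sub_distrib,
      ← reduction N ζ ρ ξ hN K]
    exact Finset.sum_congr rfl fun p _ => by ring
  · symm
    rw [PowerSeries.coeff_mul]
    have hterm : ∀ uv ∈ Finset.HasAntidiagonal.antidiagonal K,
        PowerSeries.coeff uv.1 (PowerSeries.mk fun K =>
          (∑' m : ℕ+, (ζ ^ (m : ℕ) + ζ ^ (-((m : ℕ) : ℤ))) * ρ ^ (m : ℕ) *
            ((if K = N * (m : ℕ) ^ 2 then ∑ j ∈ Finset.Icc 1 (N * (m : ℕ)), ξ ^ j else 0) +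
              ∑' r : ℕ, if N * (m : ℕ) < r ∧ K = (m : ℕ) * r then
                ξ ^ r - ξ ^ (r - N * (m : ℕ)) else 0)) -
          ∑' m : ℕ+, (ζ ^ (m : ℕ) + ζ ^ (-((m : ℕ) : ℤ))) * ρ ^ (-((m : ℕ) : ℤ)) *
            ((if K = N * (m : ℕ) ^ 2 then ∑ j ∈ Finset.Icc 1 (N * (m : ℕ)), ξ ^ (-(j : ℤ)) else 0) +
              ∑' r : ℕ, if N * (m : ℕ) < r ∧ K = (m : ℕ) * r then
                ξ ^ (-(r : ℤ)) - ξ ^ (-(r : ℤ) + (N * (m : ℕ) : ℤ)) else 0))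
          * PowerSeries.coeff uv.2 ((qseries fun _ => (1:ℂ)) * (qseries fun _ => (1:ℂ)))
        = ∑ m ∈ MM K, cc ζ m * (PowerSeries.coeff uv.1 (Psi m (rt N ρ ξ m)) *
            PowerSeries.coeff uv.2 ((qseries fun _ => (1:ℂ)) * (qseries fun _ => (1:ℂ)))) := by
      intro uv huv
      have huv1 : uv.1 ≤ K := by
        rw [Finset.HasAntidiagonal.mem_antidiagonal] at huv; omega
      have hsmall : ∀ m : ℕ+, m ∉ MM K → uv.1 < (m : ℕ) := by
        intro m hm
        have h1 : ¬ m ≤ (⟨K + 1, K.succ_pos⟩ : ℕ+) := by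
          exact fun hle => hm (Finset.mem_Iic.2 hle)
        have h2 : (⟨K + 1, K.succ_pos⟩ : ℕ+) < m := not_le.1 h1
        have h3 : (K + 1 : ℕ) < (m : ℕ) := h2
        omega
      rw [PowerSeries.coeff_mk]
      have hv1 : (∑' m : ℕ+, (ζ ^ (m : ℕ) + ζ ^ (-((m : ℕ) : ℤ))) * ρ ^ (m : ℕ) *
            ((if uv.1 = N * (m : ℕ) ^ 2 then ∑ j ∈ Finset.Icc 1 (N * (m : ℕ)), ξ ^ j else 0) +
              ∑' r : ℕ, if N * (m : ℕ) < r ∧ uv.1 = (m : ℕ) * r then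
                ξ ^ r - ξ ^ (r - N * (m : ℕ)) else 0))
          = ∑ m ∈ MM K, (ζ ^ (m : ℕ) + ζ ^ (-((m : ℕ) : ℤ))) * ρ ^ (m : ℕ) *
            ((if uv.1 = N * (m : ℕ) ^ 2 then ∑ j ∈ Finset.Icc 1 (N * (m : ℕ)), ξ ^ j else 0) +
              ∑' r : ℕ, if N * (m : ℕ) < r ∧ uv.1 = (m : ℕ) * r then
                ξ ^ r - ξ ^ (r - N * (m : ℕ)) else 0) :=
        tsum_eq_sum (fun m hm => term1_vanish N hN ζ ρ ξ uv.1 m (hsmall m hm))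
      have hv2 : (∑' m : ℕ+, (ζ ^ (m : ℕ) + ζ ^ (-((m : ℕ) : ℤ))) * ρ ^ (-((m : ℕ) : ℤ)) *
            ((if uv.1 = N * (m : ℕ) ^ 2 then ∑ j ∈ Finset.Icc 1 (N * (m : ℕ)), ξ ^ (-(j : ℤ)) else 0) +
              ∑' r : ℕ, if N * (m : ℕ) < r ∧ uv.1 = (m : ℕ) * r then
                ξ ^ (-(r : ℤ)) - ξ ^ (-(r : ℤ) + (N * (m : ℕ) : ℤ)) else 0))
          = ∑ m ∈ MM K, (ζ ^ (m : ℕ) + ζ ^ (-((m : ℕ) : ℤ))) * ρ ^ (-((m : ℕ) : ℤ)) *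
            ((if uv.1 = N * (m : ℕ) ^ 2 then ∑ j ∈ Finset.Icc 1 (N * (m : ℕ)), ξ ^ (-(j : ℤ)) else 0) +
              ∑' r : ℕ, if N * (m : ℕ) < r ∧ uv.1 = (m : ℕ) * r then
                ξ ^ (-(r : ℤ)) - ξ ^ (-(r : ℤ) + (N * (m : ℕ) : ℤ)) else 0) :=
        tsum_eq_sum (fun m hm => term2_vanish N hN ζ ρ ξ uv.1 m (hsmall m hm))
      rw [hv1, hv2, ← Finset.sum_sub_distrib, Finset.sum_mul]
      exact Finset.sum_congr rfl fun m _ => by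
        rw [term_eq N hN ζ ρ ξ uv.1 m]; ring
    rw [Finset.sum_congr rfl hterm, Finset.sum_comm]
    apply Finset.sum_congr rfl
    intro m hm
    rw [← Finset.mul_sum]
    congr 1
    have hmn : 1 ≤ N * (m : ℕ) := Nat.mul_pos hN m.pos
    rw [← PowerSeries.coeff_mul, ← mul_assoc]
    rw [show Psi m (rt N ρ ξ m) * (qseries fun _ => (1:ℂ)) * (qseries fun _ => (1:ℂ))
        = Psi m (rt N ρ ξ m) * ((qseries fun _ => (1:ℂ)) * (qseries fun _ => (1:ℂ))) from
      mul_assoc _ _ _]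
    rw [← Am_eq N ρ ξ m hmn, PowerSeries.coeff_mk]
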